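/- arXiv:2010.14536 — 2 statements merged into one kernel-verified Lean document; each statement's English description precedes it below -/
import Mathlib

section
/- Let p be a prime and a ∈ ℤ with gcd(a,p) = 1. Then S(p,a) = p² S_k(p,a) + O(p²); in particular S(p,a) ≪ p^{5/2} (implicit constants depending at most on k). -/
open scoped Real Classical
open Finset MeasureTheory

noncomputable section

/-- `e x = exp(2πix)`. -/
def e (x : ℝ) : ℂ := Complex.exp (2 * (Real.pi : ℂ) * Complex.I * (x : ℂ))

/-- `T x = x₁³ + x₂³ + x₃³` for triples of naturals. -/
def Tn (x : Fin 3 → ℕ) : ℕ := x 0 ^ 3 + x 1 ^ 3 + x 2 ^ 3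

/-- `T x = x₁³ + x₂³ + x₃³` for triples of reals. -/
def Tr (x : Fin 3 → ℝ) : ℝ := x 0 ^ 3 + x 1 ^ 3 + x 2 ^ 3

/-- The set `𝒞` of positive integers that are sums of three positive integral cubes. -/
def SumThreeCubes : Set ℕ := {m | ∃ x : Fin 3 → ℕ, (∀ i, 1 ≤ x i) ∧ Tn x = m}

/-- `P = n^{1/(3k)}`. -/
def PP (k n : ℕ) : ℝ := (n : ℝ) ^ ((1 : ℝ) / (3 * k))

/-- `r₃(m)`: number of representations of `m` as `T x` with `1 ≤ xᵢ ≤ P`. -/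
def r3 (k n m : ℕ) : ℕ :=
  Nat.card {x : Fin 3 → ℕ // (∀ i, 1 ≤ x i ∧ (x i : ℝ) ≤ PP k n) ∧ Tn x = m}

/-- `m ∈ 𝒜(X,R)`: `1 ≤ m ≤ X` and every prime factor of `m` is at most `R`. -/
def SmoothIn (X R : ℝ) (m : ℕ) : Prop :=
  1 ≤ m ∧ (m : ℝ) ≤ X ∧ ∀ p : ℕ, p.Prime → p ∣ m → (p : ℝ) ≤ R

/-- Membership in `𝒞(P)`: triples `x` with `1 ≤ xᵢ ≤ P` and `x₀, x₁ ∈ 𝒜(P, P^η)`. -/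
def InCP (k n : ℕ) (η : ℝ) (x : Fin 3 → ℕ) : Prop :=
  (∀ i, 1 ≤ x i ∧ (x i : ℝ) ≤ PP k n) ∧
    SmoothIn (PP k n) (PP k n ^ η) (x 0) ∧ SmoothIn (PP k n) (PP k n ^ η) (x 1)

/-- `s₃(m)`: number of representations of `m` as `T x` with `x ∈ 𝒞(P)`. -/
def s3 (k n : ℕ) (η : ℝ) (m : ℕ) : ℕ :=
  Nat.card {x : Fin 3 → ℕ // InCP k n η x ∧ Tn x = m}

/-- `R(n)`: representations of `n` as sums of `s` `k`-th powers of sums of three cubes,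
counted with the multiplicities `r₃`. -/
def RR (k s n : ℕ) : ℝ :=
  ∑' X : {X : Fin s → ℕ // (∀ i, X i ∈ SumThreeCubes) ∧ ∑ i, X i ^ k = n},
    ∏ i, (r3 k n (X.1 i) : ℝ)

/-- `R_η(n)`: as `R(n)` but with the multiplicities `s₃`. -/
def Reta (k s n : ℕ) (η : ℝ) : ℝ :=
  ∑' X : {X : Fin s → ℕ // (∀ i, X i ∈ SumThreeCubes) ∧ ∑ i, X i ^ k = n},
    ∏ i, (s3 k n η (X.1 i) : ℝ)

/-- `r(n)`: representations of `n` as sums of `s` `k`-th powers of elements of `𝒞`,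
counted without multiplicities. -/
def rcount (k s n : ℕ) : ℕ :=
  Nat.card {X : Fin s → ℕ // (∀ i, X i ∈ SumThreeCubes) ∧ ∑ i, X i ^ k = n}

/-- The complete exponential sum `S(q,a) = Σ_{1 ≤ r ≤ q} e_q(a T(r)^k)`. -/
def Sqa (k q : ℕ) (a : ℤ) : ℂ :=
  ∑ r ∈ Fintype.piFinset (fun _ : Fin 3 => Finset.Icc 1 q),
    e (((a * (Tn r : ℤ) ^ k : ℤ) : ℝ) / q)

/-- `S_k(q,a) = Σ_{r=1}^{q} e_q(a r^k)`. -/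
def Ska (k q : ℕ) (a : ℤ) : ℂ :=
  ∑ r ∈ Finset.Icc 1 q, e (((a * (r : ℤ) ^ k : ℤ) : ℝ) / q)

/-- `S_n(q) = Σ_{a=1,(a,q)=1}^{q} (q^{-3} S(q,a))^s e_q(-na)`. -/
def Snq (k s n q : ℕ) : ℂ :=
  ∑ a ∈ (Finset.Icc 1 q).filter (fun a => Nat.gcd a q = 1),
    (((q : ℂ) ^ 3)⁻¹ * Sqa k q (a : ℤ)) ^ s * e (-(((a * n : ℕ) : ℝ) / q))

/-- `S_s^*(q) = Σ_{a=1,(a,q)=1}^{q} |q^{-3} S(q,a)|^s`. -/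
def Ssstar (k s q : ℕ) : ℝ :=
  ∑ a ∈ (Finset.Icc 1 q).filter (fun a => Nat.gcd a q = 1),
    ‖((q : ℂ) ^ 3)⁻¹ * Sqa k q (a : ℤ)‖ ^ s

/-- The singular series `𝔖(n) = Σ_{q ≥ 1} S_n(q)`. -/
def SingSeries (k s n : ℕ) : ℂ := ∑' q : ℕ, Snq k s n (q + 1)

/-- The Weyl sum `f(α) = Σ_{1 ≤ x ≤ P} e(α T(x)^k)`. -/
def fexp (k n : ℕ) (α : ℝ) : ℂ :=
  ∑ x ∈ Fintype.piFinset (fun _ : Fin 3 => Finset.Icc 1 ⌊PP k n⌋₊),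
    e (α * ((Tn x : ℝ)) ^ k)

/-- The smooth Weyl sum `g(α) = Σ_{x ∈ 𝒞(P)} e(α T(x)^k)`. -/
def gexp (k n : ℕ) (η : ℝ) (α : ℝ) : ℂ :=
  ∑ x ∈ (Fintype.piFinset (fun _ : Fin 3 => Finset.Icc 1 ⌊PP k n⌋₊)).filter
      (fun x => InCP k n η x),
    e (α * ((Tn x : ℝ)) ^ k)

/-- The major arcs `𝔐` of level `P^ξ`. -/
def majorArcs (k n : ℕ) (ξ : ℝ) : Set ℝ :=
  ⋃ q : ℕ, ⋃ a : ℕ,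
    ⋃ (_ : 1 ≤ q ∧ a ≤ q ∧ (q : ℝ) ≤ PP k n ^ ξ ∧ Nat.gcd a q = 1),
      {α ∈ Set.Ico (0 : ℝ) 1 | |α - (a : ℝ) / q| ≤ PP k n ^ ξ / ((q : ℝ) * n)}

/-- The minor arcs `𝔪 = [0,1) ∖ 𝔐`. -/
def minorArcs (k n : ℕ) (ξ : ℝ) : Set ℝ := Set.Ico (0 : ℝ) 1 \ majorArcs k n ξ

/-- The major arcs `𝔑` (with `κ = 1/5`). -/
def majorArcsN (k n : ℕ) : Set ℝ :=
  ⋃ q : ℕ, ⋃ a : ℕ,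
    ⋃ (_ : 1 ≤ q ∧ a ≤ q ∧ (q : ℝ) ≤ Real.log (PP k n) ^ ((1 : ℝ) / 5) ∧ Nat.gcd a q = 1),
      {α ∈ Set.Ico (0 : ℝ) 1 |
        |α - (a : ℝ) / q| ≤ Real.log (PP k n) ^ ((1 : ℝ) / 5) / ((q : ℝ) * PP k n ^ (3 * k))}

/-- The minor arcs `𝔫 = [0,1) ∖ 𝔑`. -/
def minorArcsN (k n : ℕ) : Set ℝ := Set.Ico (0 : ℝ) 1 \ majorArcsN k n

/-- `v(β) = ∫_{[0,P]³} e(β T(x)^k) dx`. -/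
def vint (k n : ℕ) (β : ℝ) : ℂ :=
  ∫ x in Set.univ.pi (fun _ : Fin 3 => Set.Icc (0 : ℝ) (PP k n)), e (β * Tr x ^ k)

/-- The constant `Γ(4/3)^{3s} Γ(1+1/k)^s Γ(s/k)^{-1}`. -/
def MainC (k s : ℕ) : ℝ :=
  Real.Gamma (4 / 3) ^ (3 * s) * Real.Gamma (1 + 1 / k) ^ s * (Real.Gamma ((s : ℝ) / k))⁻¹

/-- The defining properties of Dickman's function `ρ`. -/
def IsDickman (ρ : ℝ → ℝ) : Prop :=
  (∀ x : ℝ, x < 0 → ρ x = 0) ∧ (∀ x : ℝ, 0 ≤ x → x ≤ 1 → ρ x = 1) ∧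
    ContinuousOn ρ (Set.Ioi (0 : ℝ)) ∧ (∀ x : ℝ, 1 < x → DifferentiableAt ℝ ρ x) ∧
    (∀ x : ℝ, 1 < x → x * deriv ρ x = -ρ (x - 1))

/-- `A_r(m)`: the number of `P^η`-smooth numbers `x ≤ m` with `x ≡ r (mod q)`. -/
def Acount (P η : ℝ) (q r m : ℕ) : ℕ :=
  Nat.card {x : ℕ // 1 ≤ x ∧ x ≤ m ∧ (∀ p : ℕ, p.Prime → p ∣ x → (p : ℝ) ≤ P ^ η) ∧
    x % q = r}

/-- The Vinogradov exponential sum `f_k(α; X) = Σ_{1 ≤ x ≤ X} e(α₁ x + ⋯ + α_k x^k)`. -/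
def fkV (k : ℕ) (α : Fin k → ℝ) (X : ℝ) : ℂ :=
  ∑ x ∈ Finset.Icc 1 ⌊X⌋₊, e (∑ j : Fin k, α j * (x : ℝ) ^ ((j : ℕ) + 1))

/-- `ℳ_{3,3}(q)` (for `q = p^h`): residues of the form `x₁³+x₂³+x₃³` with `p ∤ x₁`. -/
def M33 (q p : ℕ) : Set (ZMod q) :=
  {y | ∃ x : Fin 3 → ℤ, ¬ (p : ℤ) ∣ x 0 ∧ ((x 0 ^ 3 + x 1 ^ 3 + x 2 ^ 3 : ℤ) : ZMod q) = y}

/-- `M_n(p^h)`: solutions of `Σ T(yᵢ)^k ≡ n (mod p^h)` with `1 ≤ yᵢⱼ ≤ p^h`. -/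
def Mn (k s p h n : ℕ) : ℕ :=
  Nat.card {Y : Fin s → Fin 3 → ℕ // (∀ i j, 1 ≤ Y i j ∧ Y i j ≤ p ^ h) ∧
    (∑ i, Tn (Y i) ^ k) ≡ n [MOD p ^ h]}

/-- `M_n^*(p^h)`: as `M_n(p^h)`, with additionally `p ∤ y₁,₁` and `p ∤ T(y₁)`. -/
def MnStar (k s p h n : ℕ) [NeZero s] : ℕ :=
  Nat.card {Y : Fin s → Fin 3 → ℕ // (∀ i j, 1 ≤ Y i j ∧ Y i j ≤ p ^ h) ∧
    (∑ i, Tn (Y i) ^ k) ≡ n [MOD p ^ h] ∧ ¬ p ∣ Y 0 0 ∧ ¬ p ∣ Tn (Y 0)}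

/-!
Over `𝔽_p`, with `ψ` the standard additive character and `N(t)` the number of solutions of
`x₁³ + x₂³ + x₃³ = t`, we have `S(p,a) = ∑ₜ N(t) ψ(a tᵏ)` and `S_k(p,a) = ∑ₜ ψ(a tᵏ)`, so
`|S(p,a) - p² S_k(p,a)| ≤ ∑ₜ |N(t) - p²|`. The Fourier transform of `N - p²` vanishes at `0`
and equals `K₃(b)³` at `b ≠ 0`, where `K_m(b) = ∑ₜ ψ(b tᵐ)`. The second moment
`∑_b |K_m(b)|² ≤ m p²` together with the invariance of `|K_m(b)|` under `b ↦ uᵐ b` gives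
`|K_m(b)|² ≤ 2 m² p` for `b ≠ 0`; by Parseval `∑ₜ (N(t) - p²)² ≪ p³`, and Cauchy–Schwarz gives
`∑ₜ |N(t) - p²| ≪ p²`. The bound `|K_k(a)| ≪ √p` then yields `S(p,a) ≪ p^{5/2}`.
-/

lemma sum_comp_eq_sum_card_nsmul {α β M : Type*} [Fintype α] [Fintype β] [DecidableEq β]
    [AddCommMonoid M] (φ : α → β) (F : β → M) :
    ∑ x, F (φ x) = ∑ t, #{x | φ x = t} • F t := by
  rw [← Finset.sum_fiberwise' univ φ F]
  simp only [sum_const]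

lemma card_filter_pow_eq_le {R : Type*} [CommRing R] [IsDomain R] [Fintype R] [DecidableEq R]
    {m : ℕ} (hm : m ≠ 0) (w : R) : #{x : R | x ^ m = w} ≤ m := by
  have hroots : ({x : R | x ^ m = w} : Finset R) = (Polynomial.nthRoots m w).toFinset := by
    ext x
    simp [Polynomial.mem_nthRoots (Nat.pos_of_ne_zero hm)]
  rw [hroots]
  exact (Multiset.toFinset_card_le _).trans (Polynomial.card_nthRoots m w)

lemma norm_sum_comp_sub_le {α β : Type*} [Fintype α] [Fintype β] [DecidableEq β]
    (φ : α → β) (c : ℝ) {G : β → ℂ} (hG : ∀ t, ‖G t‖ ≤ 1) :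
    ‖∑ x, G (φ x) - c * ∑ t, G t‖ ≤ ∑ t, |(#{x | φ x = t} : ℝ) - c| := by
  have hsplit : ∑ x, G (φ x) - c * ∑ t, G t = ∑ t, (((#{x | φ x = t} : ℝ) - c : ℝ) : ℂ) * G t := by
    rw [sum_comp_eq_sum_card_nsmul φ G, mul_sum, ← sum_sub_distrib]
    refine sum_congr rfl fun t _ => ?_
    push_cast
    rw [nsmul_eq_mul]
    ring
  rw [hsplit]
  refine (norm_sum_le _ _).trans (sum_le_sum fun t _ => ?_)
  rw [norm_mul, Complex.norm_real, Real.norm_eq_abs]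
  exact mul_le_of_le_one_right (abs_nonneg _) (hG t)

namespace AddChar.IsPrimitive

variable {R : Type*} [CommRing R] [Fintype R] [DecidableEq R] {ψ : AddChar R ℂ}

theorem parseval (hψ : ψ.IsPrimitive) (g : R → ℂ) :
    ∑ b, ‖∑ t, g t * ψ (t * b)‖ ^ 2 = Fintype.card R * ∑ t, ‖g t‖ ^ 2 := by
  have hsq : ∀ z : ℂ, ((‖z‖ ^ 2 : ℝ) : ℂ) = z * (starRingEnd ℂ) z := fun z => by
    rw [Complex.mul_conj, Complex.normSq_eq_norm_sq]
  have hexpand : ∀ b, ((‖∑ t, g t * ψ (t * b)‖ ^ 2 : ℝ) : ℂ) =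
      ∑ t, ∑ s, g t * (starRingEnd ℂ) (g s) * ψ (b * (t - s)) := fun b => by
    rw [hsq, map_sum, sum_mul_sum]
    refine sum_congr rfl fun t _ => sum_congr rfl fun s _ => ?_
    rw [(starRingEnd ℂ).map_mul, ← AddChar.map_neg_eq_conj, mul_sub, sub_eq_add_neg,
      AddChar.map_add_eq_mul, mul_comm b t, mul_comm b s]
    ring
  apply Complex.ofReal_injective
  rw [Complex.ofReal_sum, Complex.ofReal_mul, Complex.ofReal_sum, Complex.ofReal_natCast]
  simp_rw [hexpand, hsq, mul_sum]
  rw [sum_comm]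
  refine sum_congr rfl fun t _ => ?_
  rw [sum_comm]
  simp_rw [← mul_sum, AddChar.sum_mulShift _ hψ]
  simp only [sub_eq_zero, Nat.cast_ite, Nat.cast_zero, mul_ite, mul_zero, sum_ite_eq,
    mem_univ, if_true]
  ring

end AddChar.IsPrimitive

lemma AddChar.map_sum_eq_prod {ι A M : Type*} [AddCommMonoid A] [CommMonoid M]
    (ψ : AddChar A M) (s : Finset ι) (f : ι → A) : ψ (∑ i ∈ s, f i) = ∏ i ∈ s, ψ (f i) := by
  classical
  induction s using Finset.induction_on with
  | empty => simp
  | insert i s hi ih => rw [sum_insert hi, prod_insert hi, ψ.map_add_eq_mul, ih]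

def powSum {R : Type*} [CommRing R] [Fintype R] (ψ : AddChar R ℂ) (m : ℕ) (b : R) : ℂ :=
  ∑ t, ψ (t ^ m * b)

section PowSum

variable {R : Type*} [CommRing R] [Fintype R] (ψ : AddChar R ℂ) (m : ℕ)

lemma powSum_zero : powSum ψ m 0 = Fintype.card R := by
  simp [powSum]

lemma powSum_units_pow_mul (u : Rˣ) (b : R) : powSum ψ m ((u : R) ^ m * b) = powSum ψ m b :=
  Fintype.sum_equiv (Units.mulRight u) _ _ fun t => by
    rw [Units.mulRight_apply, mul_pow, mul_assoc]

lemma sum_addChar_sum_pow_mul {ι : Type*} [Fintype ι] [DecidableEq ι] (b : R) :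
    ∑ x : ι → R, ψ ((∑ i, x i ^ m) * b) = powSum ψ m b ^ Fintype.card ι := by
  rw [← card_univ, ← prod_const, powSum, Fintype.prod_sum]
  refine sum_congr rfl fun x _ => ?_
  rw [sum_mul, AddChar.map_sum_eq_prod]

variable [DecidableEq R]

lemma powSum_eq_sum_card_mul (b : R) :
    powSum ψ m b = ∑ u, (#{t : R | t ^ m = u} : ℂ) * ψ (u * b) := by
  simp only [powSum, sum_comp_eq_sum_card_nsmul (· ^ m) (fun u => ψ (u * b)), nsmul_eq_mul]

variable {ψ m}

theorem AddChar.IsPrimitive.sum_card_sum_pow_eq_sub_mul (hψ : ψ.IsPrimitive) (n : ℕ) (b : R) :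
    ∑ t, (((#{x : Fin (n + 1) → R | ∑ i, x i ^ m = t} : ℝ) - Fintype.card R ^ n : ℝ) : ℂ) *
        ψ (t * b) = if b = 0 then 0 else powSum ψ m b ^ (n + 1) := by
  have hcount : ∑ t, (#{x : Fin (n + 1) → R | ∑ i, x i ^ m = t} : ℂ) * ψ (t * b) =
      powSum ψ m b ^ (n + 1) := by
    simp_rw [← nsmul_eq_mul, ← sum_comp_eq_sum_card_nsmul (fun x : Fin (n + 1) → R => ∑ i, x i ^ m)
      (fun t => ψ (t * b)), sum_addChar_sum_pow_mul, Fintype.card_fin]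
  push_cast
  simp_rw [sub_mul]
  rw [sum_sub_distrib, hcount, ← mul_sum, AddChar.sum_mulShift b hψ]
  split_ifs with hb
  · rw [hb, powSum_zero]
    ring
  · rw [Nat.cast_zero, mul_zero, sub_zero]

variable [IsDomain R]

theorem AddChar.IsPrimitive.sum_norm_sq_powSum_le (hψ : ψ.IsPrimitive) (hm : m ≠ 0) :
    ∑ b, ‖powSum ψ m b‖ ^ 2 ≤ m * Fintype.card R ^ 2 := by
  set N : R → ℕ := fun u => #{t : R | t ^ m = u}
  have hN : ∑ u, N u = Fintype.card R :=
    (card_eq_sum_card_fiberwise fun t _ => mem_univ (t ^ m)).symm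
  calc ∑ b, ‖powSum ψ m b‖ ^ 2 = Fintype.card R * ∑ u, (N u : ℝ) ^ 2 := by
        simp_rw [powSum_eq_sum_card_mul, hψ.parseval, Complex.norm_natCast]
        rfl
    _ ≤ Fintype.card R * ∑ u, (m * N u : ℝ) := by
        gcongr with u
        rw [sq]
        gcongr
        exact_mod_cast card_filter_pow_eq_le hm u
    _ = m * Fintype.card R ^ 2 := by
        rw [← mul_sum, ← Nat.cast_sum, hN]
        ring

end PowSum

section FiniteField

variable {F : Type*} [Field F] [Fintype F] [DecidableEq F] {m : ℕ}

lemma card_sub_one_mul_le_of_pow_mul_invariant (hm : m ≠ 0) {f : F → ℝ} (hf : ∀ c, 0 ≤ f c)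
    {b : F} (hb : b ≠ 0) (hinv : ∀ u ≠ 0, f (u ^ m * b) = f b) :
    (Fintype.card F - 1) * f b ≤ m * ∑ c, f c := by
  have hfiber : ∀ c, #{u : F | u ^ m * b = c} ≤ m := fun c => by
    simp_rw [← eq_mul_inv_iff_mul_eq₀ hb]
    exact card_filter_pow_eq_le hm _
  calc (Fintype.card F - 1) * f b = ∑ u ∈ univ.erase 0, f (u ^ m * b) := by
        rw [sum_congr rfl fun u hu => hinv u (ne_of_mem_erase hu), sum_const,
          card_erase_of_mem (mem_univ _), card_univ, nsmul_eq_mul,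
          Nat.cast_sub Fintype.card_pos, Nat.cast_one]
    _ ≤ ∑ u, f (u ^ m * b) := sum_le_sum_of_subset_of_nonneg (erase_subset _ _)
        fun u _ _ => hf _
    _ = ∑ c, #{u : F | u ^ m * b = c} • f c := sum_comp_eq_sum_card_nsmul (· ^ m * b) f
    _ ≤ ∑ c, m * f c := sum_le_sum fun c _ => by
        rw [nsmul_eq_mul]
        gcongr
        · exact hf c
        · exact_mod_cast hfiber c
    _ = m * ∑ c, f c := (mul_sum _ _ _).symm

variable {ψ : AddChar F ℂ}

theorem AddChar.IsPrimitive.norm_sq_powSum_le (hψ : ψ.IsPrimitive) (hm : m ≠ 0) {b : F}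
    (hb : b ≠ 0) : ‖powSum ψ m b‖ ^ 2 ≤ 2 * m ^ 2 * Fintype.card F := by
  have hq : (2 : ℝ) ≤ Fintype.card F := by exact_mod_cast (Fintype.one_lt_card : 1 < Fintype.card F)
  have hcoset := card_sub_one_mul_le_of_pow_mul_invariant (f := fun c => ‖powSum ψ m c‖ ^ 2) hm
    (fun c => by positivity) hb fun u hu =>
      congrArg (‖·‖ ^ 2) (powSum_units_pow_mul ψ m (Units.mk0 u hu) b)
  have hmoment := mul_le_mul_of_nonneg_left (hψ.sum_norm_sq_powSum_le hm) (Nat.cast_nonneg m)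
  have hq2 : 0 ≤ (m : ℝ) ^ 2 * Fintype.card F * (Fintype.card F - 2) := by
    have := sub_nonneg.mpr hq
    positivity
  nlinarith [sq_nonneg ‖powSum ψ m b‖]

theorem AddChar.IsPrimitive.norm_powSum_le (hψ : ψ.IsPrimitive) (hm : m ≠ 0) {b : F}
    (hb : b ≠ 0) : ‖powSum ψ m b‖ ≤ 2 * m * √(Fintype.card F) := by
  refine (pow_le_pow_iff_left₀ (norm_nonneg _) (by positivity) two_ne_zero).mp ?_
  rw [mul_pow, mul_pow, Real.sq_sqrt (Nat.cast_nonneg _)]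
  nlinarith [hψ.norm_sq_powSum_le hm hb, sq_nonneg (m : ℝ),
    (Nat.cast_nonneg _ : (0 : ℝ) ≤ Fintype.card F)]

end FiniteField

theorem sum_sq_card_sum_pow_eq_sub_le {F : Type*} [Field F] [Fintype F] [DecidableEq F] {m : ℕ}
    (hm : m ≠ 0) (n : ℕ) :
    ∑ t : F, ((#{x : Fin (n + 1) → F | ∑ i, x i ^ m = t} : ℝ) - Fintype.card F ^ n) ^ 2 ≤
      2 ^ n * m ^ (2 * n + 1) * Fintype.card F ^ (n + 1) := by
  obtain ⟨ψ, hψ⟩ : ∃ ψ : AddChar F ℂ, ψ.IsPrimitive :=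
    ⟨_, AddChar.FiniteField.primitiveChar_to_Complex_isPrimitive F⟩
  have hterm : ∀ b, ‖if b = 0 then 0 else powSum ψ m b ^ (n + 1)‖ ^ 2 ≤
      (2 * m ^ 2 * Fintype.card F) ^ n * ‖powSum ψ m b‖ ^ 2 := fun b => by
    split_ifs with hb
    · rw [norm_zero, zero_pow two_ne_zero]
      positivity
    · calc _ = (‖powSum ψ m b‖ ^ 2) ^ n * ‖powSum ψ m b‖ ^ 2 := by rw [norm_pow]; ring
        _ ≤ _ := by gcongr; exact hψ.norm_sq_powSum_le hm hb
  have hparseval := hψ.parseval fun t =>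
    (((#{x : Fin (n + 1) → F | ∑ i, x i ^ m = t} : ℝ) - Fintype.card F ^ n : ℝ) : ℂ)
  simp only [hψ.sum_card_sum_pow_eq_sub_mul, Complex.norm_real, Real.norm_eq_abs, sq_abs]
    at hparseval
  refine le_of_mul_le_mul_left ?_ (Nat.cast_pos.mpr Fintype.card_pos : (0 : ℝ) < Fintype.card F)
  calc _ = _ := hparseval.symm
    _ ≤ _ := sum_le_sum fun b _ => hterm b
    _ ≤ (2 * m ^ 2 * Fintype.card F) ^ n * (m * Fintype.card F ^ 2) := by
      rw [← mul_sum]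
      gcongr
      exact hψ.sum_norm_sq_powSum_le hm
    _ = _ := by ring

section Cubes

variable {F : Type*} [Field F] [Fintype F] [DecidableEq F]

theorem sum_abs_card_sum_cube_eq_sub_le :
    ∑ t : F, |(#{x : Fin 3 → F | ∑ i, x i ^ 3 = t} : ℝ) - Fintype.card F ^ 2| ≤
      32 * Fintype.card F ^ 2 := by
  have hsq : ∑ t : F, ((#{x : Fin 3 → F | ∑ i, x i ^ 3 = t} : ℝ) - Fintype.card F ^ 2) ^ 2 ≤
      972 * Fintype.card F ^ 3 := by
    convert sum_sq_card_sum_pow_eq_sub_le (F := F) three_ne_zero 2 using 1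
    norm_num
  have hcs := sq_sum_le_card_mul_sum_sq (s := univ)
    (f := fun t : F => |(#{x : Fin 3 → F | ∑ i, x i ^ 3 = t} : ℝ) - Fintype.card F ^ 2|)
  simp only [sq_abs, card_univ] at hcs
  refine (pow_le_pow_iff_left₀ (sum_nonneg fun _ _ => abs_nonneg _) (by positivity)
    two_ne_zero).mp ?_
  calc _ ≤ _ := hcs
    _ ≤ (Fintype.card F : ℝ) * (972 * Fintype.card F ^ 3) := by gcongr
    _ ≤ _ := by nlinarith [pow_nonneg (Nat.cast_nonneg (Fintype.card F) : (0 : ℝ) ≤ _) 4]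

theorem norm_sum_addChar_sum_cube_pow_mul_sub_le (ψ : AddChar F ℂ) (k : ℕ) (b : F) :
    ‖∑ x : Fin 3 → F, ψ ((∑ i, x i ^ 3) ^ k * b) - (Fintype.card F : ℂ) ^ 2 * powSum ψ k b‖ ≤
      32 * Fintype.card F ^ 2 := by
  have h := norm_sum_comp_sub_le (fun x : Fin 3 → F => ∑ i, x i ^ 3) ((Fintype.card F : ℝ) ^ 2)
    (G := fun t => ψ (t ^ k * b)) fun t => (ψ.norm_apply _).le
  push_cast at h
  exact h.trans sum_abs_card_sum_cube_eq_sub_le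

end Cubes

section ZMod

variable {p : ℕ}

lemma val_natCast_sub_one_add_one {r : ℕ} (hr : r ∈ Icc 1 p) : ((r : ZMod p) - 1).val + 1 = r := by
  obtain ⟨h1, h2⟩ := mem_Icc.mp hr
  rw [← Nat.cast_one, ← Nat.cast_sub h1, ZMod.val_natCast_of_lt (by omega)]
  omega

variable [NeZero p]

lemma e_intCast_div_eq_stdAddChar (z : ℤ) : e ((z : ℝ) / p) = ZMod.stdAddChar (z : ZMod p) := by
  rw [ZMod.stdAddChar_coe, e]
  push_cast
  ring_nf

lemma val_sub_one_add_one_mem_Icc (x : ZMod p) : (x - 1).val + 1 ∈ Icc 1 p :=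
  mem_Icc.mpr ⟨Nat.le_add_left 1 _, (x - 1).val_lt⟩

lemma natCast_val_sub_one_add_one (x : ZMod p) : (((x - 1).val + 1 : ℕ) : ZMod p) = x := by
  simp

lemma sum_Icc_one_natCast {M : Type*} [AddCommMonoid M] (f : ZMod p → M) :
    ∑ r ∈ Icc 1 p, f r = ∑ x, f x :=
  sum_nbij' (↑) (fun x => (x - 1).val + 1) (fun _ _ => mem_univ _)
    (fun x _ => val_sub_one_add_one_mem_Icc x) (fun _ hr => val_natCast_sub_one_add_one hr)
    (fun x _ => natCast_val_sub_one_add_one x) fun _ _ => rfl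

lemma sum_piFinset_Icc_one_natCast {ι M : Type*} [Fintype ι] [DecidableEq ι] [AddCommMonoid M]
    (f : (ι → ZMod p) → M) :
    ∑ r ∈ Fintype.piFinset fun _ : ι => Icc 1 p, f (fun i => r i) = ∑ x, f x :=
  sum_nbij' (fun r i => r i) (fun x i => (x i - 1).val + 1) (fun _ _ => mem_univ _)
    (fun x _ => Fintype.mem_piFinset.mpr fun i => val_sub_one_add_one_mem_Icc (x i))
    (fun _ hr => funext fun i => val_natCast_sub_one_add_one (Fintype.mem_piFinset.mp hr i))
    (fun x _ => funext fun i => natCast_val_sub_one_add_one (x i)) fun _ _ => rfl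

lemma Sqa_eq_sum_stdAddChar (k : ℕ) (a : ℤ) :
    Sqa k p a = ∑ x : Fin 3 → ZMod p, ZMod.stdAddChar ((∑ i, x i ^ 3) ^ k * (a : ZMod p)) := by
  rw [Sqa, ← sum_piFinset_Icc_one_natCast]
  refine sum_congr rfl fun r _ => ?_
  rw [e_intCast_div_eq_stdAddChar]
  push_cast [Tn, Fin.sum_univ_three]
  ring_nf

lemma Ska_eq_powSum (k : ℕ) (a : ℤ) : Ska k p a = powSum ZMod.stdAddChar k (a : ZMod p) := by
  rw [Ska, powSum, ← sum_Icc_one_natCast]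
  refine sum_congr rfl fun r _ => ?_
  rw [e_intCast_div_eq_stdAddChar]
  push_cast
  ring_nf

end ZMod

/-- `S(p,a) = p² S_k(p,a) + O(p²)`, and in particular `S(p,a) ≪ p^{5/2}`. -/
theorem statement6 (k : ℕ) (hk : 2 ≤ k) :
    ∃ C > (0 : ℝ), ∀ p : ℕ, p.Prime → ∀ a : ℤ, Int.gcd a p = 1 →
      ‖Sqa k p a - (p : ℂ) ^ 2 * Ska k p a‖ ≤ C * (p : ℝ) ^ 2 ∧
      ‖Sqa k p a‖ ≤ C * (p : ℝ) ^ ((5 : ℝ) / 2) := by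
  refine ⟨2 * k + 32, by positivity, fun p hp a ha => ?_⟩
  have := Fact.mk hp
  have ha0 : (a : ZMod p) ≠ 0 := ((ZMod.coe_int_isUnit_iff_isCoprime a p).mpr
    (Int.isCoprime_iff_gcd_eq_one.mpr (by rwa [Int.gcd_comm]))).ne_zero
  have herr := norm_sum_addChar_sum_cube_pow_mul_sub_le ZMod.stdAddChar k (a : ZMod p)
  have hK := (ZMod.isPrimitive_stdAddChar p).norm_powSum_le (by omega : k ≠ 0) ha0
  rw [← Sqa_eq_sum_stdAddChar, ← Ska_eq_powSum, ZMod.card] at herr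
  rw [← Ska_eq_powSum, ZMod.card] at hK
  have hsqrt : 1 ≤ √(p : ℝ) := Real.one_le_sqrt.mpr (by exact_mod_cast hp.one_le)
  have hp52 : (p : ℝ) ^ ((5 : ℝ) / 2) = p ^ 2 * √p := by
    rw [Real.sqrt_eq_rpow, ← Real.rpow_natCast, ← Real.rpow_add (by exact_mod_cast hp.pos)]
    norm_num
  refine ⟨herr.trans (by nlinarith [sq_nonneg (p : ℝ)]), ?_⟩
  calc ‖Sqa k p a‖ ≤ ‖(p : ℂ) ^ 2 * Ska k p a‖ + ‖Sqa k p a - (p : ℂ) ^ 2 * Ska k p a‖ :=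
        norm_le_insert' _ _
    _ ≤ p ^ 2 * (2 * k * √p) + 32 * p ^ 2 := by
        rw [norm_mul, norm_pow, Complex.norm_natCast]
        gcongr
    _ ≤ (2 * k + 32) * (p : ℝ) ^ ((5 : ℝ) / 2) := by
        rw [hp52]
        nlinarith [sq_nonneg (p : ℝ)]
end
end

section
/- Let a ∈ ℤ and q ∈ ℕ with gcd(a,q) = 1 and q < P, let α ∈ [0,1) and set β = α − a/q. Then f(α) = q^{−3} S(q,a) v(β) + O( P² q (1 + n|β|) ), with implicit constant depending at most on k. -/
/-!
Split `x` into residue classes `x = r + q y` with `1 ≤ rᵢ ≤ q`. Since `T(r + q y) ≡ T(r) (mod q)`,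
`e(α T(x)^k) = e_q(a T(r)^k) e(β T(x)^k)`, so `f(α) = Σ_r e_q(a T(r)^k) Σ_y e(β T(r + q y)^k)`,
and it suffices to show that each of the `q³` inner sums is within `O(P² q⁻² (1 + n|β|))` of
`q⁻³ v(β)`. The inner sum is a Riemann sum for `q⁻³ v(β)` over the cubes of side `q` containing
the points `r + q y`: on such a cube `β T(x)^k` varies by `O(|β| n q / P)`, and the cubes fill
`[0, P]³` up to a shell of volume `O(q P²)`.
-/

open scoped Real Classical
open Finset MeasureTheory

noncomputable section

lemma e_add (x y : ℝ) : e (x + y) = e x * e y := by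
  rw [e, e, e, ← Complex.exp_add]
  push_cast
  ring_nf

lemma norm_e (x : ℝ) : ‖e x‖ = 1 := by
  simp [e, Complex.norm_exp]

lemma e_intCast (m : ℤ) : e m = 1 := by
  rw [e, show 2 * (π : ℂ) * Complex.I * ((m : ℝ) : ℂ) = m * (2 * π * Complex.I) by push_cast; ring]
  exact Complex.exp_int_mul_two_pi_mul_I m

lemma continuous_e : Continuous e := by
  unfold e
  fun_prop

lemma norm_e_sub_one_le (x : ℝ) : ‖e x - 1‖ ≤ 2 * π * |x| := by
  have h : e x = Complex.exp (Complex.I * ↑(2 * π * x)) := by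
    rw [e]
    push_cast
    ring_nf
  rw [h]
  refine Real.norm_exp_I_mul_ofReal_sub_one_le.trans_eq ?_
  rw [Real.norm_eq_abs, abs_mul, abs_of_pos Real.two_pi_pos]

lemma norm_e_sub_e_le (s t : ℝ) : ‖e s - e t‖ ≤ 2 * π * |s - t| := by
  have h : e s - e t = e t * (e (s - t) - 1) := by
    rw [mul_sub, mul_one, ← e_add, add_sub_cancel]
  rw [h, norm_mul, norm_e, one_mul]
  exact norm_e_sub_one_le _

lemma e_mul_eq_of_modEq {q : ℕ} (hq : q ≠ 0) {X Y : ℤ} (h : X ≡ Y [ZMOD q]) (a : ℤ) (α : ℝ) :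
    e (α * X) = e ((a * Y : ℤ) / q) * e ((α - a / q) * X) := by
  obtain ⟨m, hm⟩ := (Int.modEq_iff_dvd.1 h.symm)
  have hX : (X : ℝ) = Y + q * m := by
    rw [← sub_eq_iff_eq_add']
    exact_mod_cast hm
  have hsplit : α * X = (a * Y : ℤ) / q + (α - a / q) * X + (a * m : ℤ) := by
    rw [hX]
    push_cast
    field_simp
    ring
  rw [hsplit, e_add, e_add, e_intCast, mul_one]

lemma Tn_add_mul_modEq (q : ℕ) (r y : Fin 3 → ℕ) :
    (Tn (fun i => r i + q * y i) : ℤ) ≡ Tn r [ZMOD q] := by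
  rw [← ZMod.intCast_eq_intCast_iff]
  push_cast [Tn, ZMod.natCast_self]
  ring

lemma natCast_Tn (x : Fin 3 → ℕ) : (Tn x : ℝ) = Tr (fun i => (x i : ℝ)) := by
  simp [Tn, Tr]

lemma e_mul_Tn_add_mul_pow {q : ℕ} (hq : q ≠ 0) (k : ℕ) (a : ℤ) (α : ℝ) (r y : Fin 3 → ℕ) :
    e (α * (Tn (fun i => r i + q * y i) : ℝ) ^ k) =
      e (((a * (Tn r : ℤ) ^ k : ℤ) : ℝ) / q) *
        e ((α - a / q) * Tr (fun i => (r i : ℝ) + q * y i) ^ k) := by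
  have h := e_mul_eq_of_modEq hq ((Tn_add_mul_modEq q r y).pow k) a α
  push_cast at h
  rw [h, natCast_Tn (fun i => r i + q * y i)]
  push_cast
  rfl

lemma abs_pow_sub_pow_le_of_mem_Icc {a b R : ℝ} (n : ℕ) (ha : a ∈ Set.Icc 0 R)
    (hb : b ∈ Set.Icc 0 R) : |a ^ n - b ^ n| ≤ n * R ^ (n - 1) * |a - b| := by
  calc |a ^ n - b ^ n| ≤ |a - b| * n * max |a| |b| ^ (n - 1) := abs_pow_sub_pow_le a b n
    _ ≤ |a - b| * n * R ^ (n - 1) := by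
        rw [abs_of_nonneg ha.1, abs_of_nonneg hb.1]
        gcongr
        · exact le_max_of_le_left ha.1
        · exact max_le ha.2 hb.2
    _ = n * R ^ (n - 1) * |a - b| := by ring

lemma Tr_mem_Icc {x : Fin 3 → ℝ} {R : ℝ} (hx : ∀ i, x i ∈ Set.Icc 0 R) :
    Tr x ∈ Set.Icc 0 (3 * R ^ 3) := by
  have h0 (i : Fin 3) : 0 ≤ x i ^ 3 := pow_nonneg (hx i).1 3
  have hR (i : Fin 3) : x i ^ 3 ≤ R ^ 3 := pow_le_pow_left₀ (hx i).1 (hx i).2 3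
  constructor <;> simp only [Tr] <;> linarith [h0 0, h0 1, h0 2, hR 0, hR 1, hR 2]

lemma abs_Tr_sub_Tr_le {x y : Fin 3 → ℝ} {R δ : ℝ} (hx : ∀ i, x i ∈ Set.Icc 0 R)
    (hy : ∀ i, y i ∈ Set.Icc 0 R) (hxy : ∀ i, |x i - y i| ≤ δ) :
    |Tr x - Tr y| ≤ 9 * R ^ 2 * δ := by
  have hR : 0 ≤ R := (hx 0).1.trans (hx 0).2
  have hcube (i : Fin 3) : |x i ^ 3 - y i ^ 3| ≤ 3 * R ^ 2 * δ := by
    refine (abs_pow_sub_pow_le_of_mem_Icc 3 (hx i) (hy i)).trans ?_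
    norm_num
    exact mul_le_mul_of_nonneg_left (hxy i) (by positivity)
  calc |Tr x - Tr y| = |(x 0 ^ 3 - y 0 ^ 3) + (x 1 ^ 3 - y 1 ^ 3) + (x 2 ^ 3 - y 2 ^ 3)| := by
        rw [Tr, Tr]; ring_nf
    _ ≤ |x 0 ^ 3 - y 0 ^ 3| + |x 1 ^ 3 - y 1 ^ 3| + |x 2 ^ 3 - y 2 ^ 3| := abs_add_three _ _ _
    _ ≤ 9 * R ^ 2 * δ := by linarith [hcube 0, hcube 1, hcube 2]

lemma norm_e_Tr_pow_sub_le (β : ℝ) (k : ℕ) {x y : Fin 3 → ℝ} {R δ : ℝ}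
    (hx : ∀ i, x i ∈ Set.Icc 0 R) (hy : ∀ i, y i ∈ Set.Icc 0 R) (hxy : ∀ i, |x i - y i| ≤ δ) :
    ‖e (β * Tr x ^ k) - e (β * Tr y ^ k)‖ ≤
      2 * π * |β| * (k * (3 * R ^ 3) ^ (k - 1)) * (9 * R ^ 2 * δ) := by
  calc ‖e (β * Tr x ^ k) - e (β * Tr y ^ k)‖ ≤ 2 * π * (|β| * |Tr x ^ k - Tr y ^ k|) := by
        rw [← abs_mul, mul_sub]
        exact norm_e_sub_e_le _ _
    _ ≤ 2 * π * (|β| * (k * (3 * R ^ 3) ^ (k - 1) * (9 * R ^ 2 * δ))) := by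
        have hR : 0 ≤ R := (hx 0).1.trans (hx 0).2
        gcongr
        refine (abs_pow_sub_pow_le_of_mem_Icc k (Tr_mem_Icc hx) (Tr_mem_Icc hy)).trans ?_
        gcongr
        exact abs_Tr_sub_Tr_le hx hy hxy
    _ = _ := by ring

section Residues

variable {q : ℕ}

lemma residue_add_mul_quotient {x : ℕ} (hx : 1 ≤ x) :
    (x - 1) % q + 1 + q * ((x - 1) / q) = x := by
  have := Nat.mod_add_div (x - 1) q
  omega

lemma residue_mem_Icc (hq : 0 < q) (x : ℕ) : (x - 1) % q + 1 ∈ Finset.Icc 1 q := by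
  have := Nat.mod_lt (x - 1) hq
  simp only [Finset.mem_Icc]
  omega

lemma residue_quotient_of_add_mul {r : ℕ} (hr : r ∈ Finset.Icc 1 q) (y : ℕ) :
    (r + q * y - 1) % q + 1 = r ∧ (r + q * y - 1) / q = y := by
  rw [Finset.mem_Icc] at hr
  have hq : 0 < q := by omega
  rw [show r + q * y - 1 = r - 1 + q * y by omega, Nat.add_mul_mod_self_left,
    Nat.add_mul_div_left _ _ hq, Nat.mod_eq_of_lt (by omega), Nat.div_eq_of_lt (by omega)]
  omega

lemma add_mul_le_iff_lt_div (hq : 0 < q) {r N : ℕ} (hr : r ≤ N) (y : ℕ) :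
    r + q * y ≤ N ↔ y < (N - r) / q + 1 := by
  rw [Nat.lt_succ_iff, Nat.le_div_iff_mul_le hq, mul_comm]
  omega

lemma sum_piFinset_Icc_eq_sum_residues {ι M : Type*} [Fintype ι] [DecidableEq ι]
    [AddCommMonoid M] (g : (ι → ℕ) → M) (hq : 0 < q) {N : ℕ} (hqN : q ≤ N) :
    ∑ x ∈ Fintype.piFinset (fun _ : ι => Finset.Icc 1 N), g x =
      ∑ r ∈ Fintype.piFinset (fun _ : ι => Finset.Icc 1 q),
        ∑ y ∈ Fintype.piFinset (fun i => Finset.range ((N - r i) / q + 1)),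
          g (fun i => r i + q * y i) := by
  rw [Finset.sum_sigma']
  refine Finset.sum_nbij' (fun x => ⟨fun i => (x i - 1) % q + 1, fun i => (x i - 1) / q⟩)
    (fun p i => p.1 i + q * p.2 i) ?_ ?_ ?_ ?_ ?_
  · intro x hx
    simp only [Finset.mem_sigma, Fintype.mem_piFinset] at hx ⊢
    refine ⟨fun i => residue_mem_Icc hq (x i), fun i => ?_⟩
    have hxi := Finset.mem_Icc.1 (hx i)
    rw [Finset.mem_range, ← add_mul_le_iff_lt_div hq
      ((Finset.mem_Icc.1 (residue_mem_Icc hq (x i))).2.trans hqN), residue_add_mul_quotient hxi.1]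
    exact hxi.2
  · intro p hp
    simp only [Finset.mem_sigma, Fintype.mem_piFinset] at hp ⊢
    intro i
    have hri := Finset.mem_Icc.1 (hp.1 i)
    rw [Finset.mem_Icc, add_mul_le_iff_lt_div hq (by omega)]
    exact ⟨by omega, Finset.mem_range.1 (hp.2 i)⟩
  · intro x hx
    simp only [Fintype.mem_piFinset, Finset.mem_Icc] at hx
    exact funext fun i => residue_add_mul_quotient (hx i).1
  · intro p hp
    simp only [Finset.mem_sigma, Fintype.mem_piFinset] at hp
    exact Sigma.ext (funext fun i => (residue_quotient_of_add_mul (hp.1 i) (p.2 i)).1)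
      (heq_of_eq (funext fun i => (residue_quotient_of_add_mul (hp.1 i) (p.2 i)).2))
  · intro x hx
    simp only [Fintype.mem_piFinset, Finset.mem_Icc] at hx
    exact congrArg g (funext fun i => (residue_add_mul_quotient (hx i).1).symm)

end Residues

section Integrals

variable {X E : Type*} [MeasurableSpace X] {μ : Measure X} [NormedAddCommGroup E]
  [NormedSpace ℝ E] {f : X → E} {s t : Set X}

lemma norm_setIntegral_sub_smul_le [CompleteSpace E] {c : E} {ε : ℝ} (hs : μ s < ⊤)
    (hf : IntegrableOn f s μ) (hfc : ∀ x ∈ s, ‖f x - c‖ ≤ ε) :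
    ‖∫ x in s, f x ∂μ - μ.real s • c‖ ≤ ε * μ.real s := by
  rw [← setIntegral_const, ← integral_sub hf (integrableOn_const hs.ne)]
  exact norm_setIntegral_le_of_norm_le_const hs hfc

lemma norm_setIntegral_sub_setIntegral_le (hs : MeasurableSet s) (ht : MeasurableSet t)
    (hs' : μ s < ⊤) (ht' : μ t < ⊤) (hfs : IntegrableOn f s μ) (hft : IntegrableOn f t μ)
    (hf : ∀ x, ‖f x‖ ≤ 1) :
    ‖∫ x in s, f x ∂μ - ∫ x in t, f x ∂μ‖ ≤ μ.real (s \ t) + μ.real (t \ s) := by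
  rw [← integral_inter_add_sdiff ht hfs, ← integral_inter_add_sdiff hs hft, Set.inter_comm,
    add_sub_add_left_eq_sub]
  refine (norm_sub_le _ _).trans (add_le_add ?_ ?_) <;>
    refine (norm_setIntegral_le_of_norm_le_const ?_ fun x _ => hf x).trans_eq (one_mul _)
  exacts [(measure_mono Set.sdiff_subset).trans_lt hs',
    (measure_mono Set.sdiff_subset).trans_lt ht']

end Integrals

section Boxes

variable {ι : Type*} [Fintype ι]

lemma volume_pi_Ioc_lt_top (a b : ι → ℝ) :
    volume (Set.univ.pi fun i => Set.Ioc (a i) (b i)) < ⊤ := by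
  rw [Real.volume_pi_Ioc]
  exact ENNReal.prod_lt_top fun _ _ => ENNReal.ofReal_lt_top

lemma Continuous.integrableOn_pi_Ioc {E : Type*} [NormedAddCommGroup E] {F : (ι → ℝ) → E}
    (hF : Continuous F) (a b : ι → ℝ) :
    IntegrableOn F (Set.univ.pi fun i => Set.Ioc (a i) (b i)) :=
  (hF.integrableOn_Icc (a := a) (b := b)).mono_set (by
    rw [← Set.pi_univ_Icc]
    exact Set.pi_mono fun _ _ => Set.Ioc_subset_Icc_self)

lemma measureReal_pi_Ioc_sdiff_le {A B : ι → ℝ} {R d : ℝ}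
    (hA : ∀ i, A i ∈ Set.Icc 0 R) (hAB : ∀ i, |A i - B i| ≤ d) :
    volume.real (Set.univ.pi (fun i => Set.Ioc 0 (A i)) \ Set.univ.pi (fun i => Set.Ioc 0 (B i)))
      ≤ Fintype.card ι * (d * R ^ (Fintype.card ι - 1)) := by
  classical
  -- the `i`-th slab: `xᵢ ∈ (min (A i) (B i), A i]` and `xⱼ ∈ (0, A j]` for `j ≠ i`
  set lo : ι → ι → ℝ := fun i => Function.update 0 i (min (A i) (B i))
  have hlo (i : ι) : lo i ≤ A := by
    intro j
    rcases eq_or_ne j i with rfl | hji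
    · simp [lo]
    · simpa [lo, hji] using (hA j).1
  have hsub : Set.univ.pi (fun i => Set.Ioc 0 (A i)) \ Set.univ.pi (fun i => Set.Ioc 0 (B i)) ⊆
      ⋃ i, Set.univ.pi (fun j => Set.Ioc (lo i j) (A j)) := by
    rintro x ⟨hxA, hxB⟩
    simp only [Set.mem_pi, Set.mem_univ, true_implies, not_forall] at hxA hxB
    obtain ⟨i, hi⟩ := hxB
    refine Set.mem_iUnion.2 ⟨i, Set.mem_univ_pi.2 fun j => ⟨?_, (hxA j).2⟩⟩
    rcases eq_or_ne j i with rfl | hji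
    · have : B j < x j := by
        by_contra! h
        exact hi ⟨(hxA j).1, h⟩
      simpa [lo] using Or.inr this
    · simpa [lo, hji] using (hxA j).1
  have hslab (i : ι) : volume.real (Set.univ.pi (fun j => Set.Ioc (lo i j) (A j))) ≤
      d * R ^ (Fintype.card ι - 1) := by
    rw [measureReal_def, Real.volume_pi_Ioc_toReal (hlo i)]
    calc ∏ j, (A j - lo i j) ≤ ∏ j, Function.update (fun _ => R) i d j := by
          refine Finset.prod_le_prod (fun j _ => sub_nonneg.2 (hlo i j)) fun j _ => ?_
          rcases eq_or_ne j i with rfl | hji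
          · simp only [lo, Function.update_self]
            rcases min_choice (A j) (B j) with h | h <;> rw [h]
            · exact (sub_self _).trans_le ((abs_nonneg _).trans (hAB j))
            · exact (le_abs_self _).trans (hAB j)
          · simpa [lo, hji] using (hA j).2
      _ = d * R ^ (Fintype.card ι - 1) := by
          simp [Finset.prod_update_of_mem, Finset.card_univ_sdiff]
  calc _ ≤ volume.real (⋃ i, Set.univ.pi (fun j => Set.Ioc (lo i j) (A j))) :=
        measureReal_mono hsub ((measure_iUnion_fintype_le _ _).trans_lt
          (ENNReal.sum_lt_top.2 fun i _ => volume_pi_Ioc_lt_top _ _)).ne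
    _ ≤ ∑ i, volume.real (Set.univ.pi (fun j => Set.Ioc (lo i j) (A j))) :=
        measureReal_iUnion_fintype_le _
    _ ≤ ∑ _i : ι, d * R ^ (Fintype.card ι - 1) := Finset.sum_le_sum fun i _ => hslab i
    _ = _ := by simp

lemma norm_setIntegral_pi_Ioc_sub_pi_Icc_le {F : (ι → ℝ) → ℂ} (hF : Continuous F)
    (hF1 : ∀ x, ‖F x‖ ≤ 1) {A : ι → ℝ} {P R d : ℝ} (hA : ∀ i, A i ∈ Set.Icc 0 R)
    (hP : P ∈ Set.Icc 0 R) (hAP : ∀ i, |A i - P| ≤ d) :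
    ‖(∫ x in Set.univ.pi (fun i => Set.Ioc 0 (A i)), F x) -
        ∫ x in Set.univ.pi (fun _ : ι => Set.Icc 0 P), F x‖ ≤
      2 * (Fintype.card ι * (d * R ^ (Fintype.card ι - 1))) := by
  have hIoc := Measure.pi_Ioc_ae_eq_pi_Icc (μ := fun _ : ι => (volume : Measure ℝ))
    (s := Set.univ) (f := fun _ => 0) (g := fun _ => P)
  rw [← volume_pi] at hIoc
  rw [← setIntegral_congr_set hIoc]
  refine (norm_setIntegral_sub_setIntegral_le (MeasurableSet.univ_pi fun _ => measurableSet_Ioc)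
    (MeasurableSet.univ_pi fun _ => measurableSet_Ioc) (volume_pi_Ioc_lt_top (fun _ => 0) A)
    (volume_pi_Ioc_lt_top (fun _ => 0) fun _ => P) (hF.integrableOn_pi_Ioc (fun _ => 0) A)
    (hF.integrableOn_pi_Ioc (fun _ => 0) fun _ => P)
    hF1).trans ?_
  rw [two_mul]
  exact add_le_add (measureReal_pi_Ioc_sdiff_le hA hAP)
    (measureReal_pi_Ioc_sdiff_le (fun _ => hP) fun i => (abs_sub_comm _ _).trans_le (hAP i))

lemma norm_pow_mul_sub_setIntegral_cube_le {F : (ι → ℝ) → ℂ} (hF : Continuous F) {q : ℕ}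
    (hq : 0 < q) {r y : ι → ℕ} (hr : ∀ i, r i ∈ Finset.Icc 1 q) {R ε : ℝ}
    (hyR : ∀ i, (q : ℝ) * (y i + 1) ≤ R)
    (hε : ∀ x y : ι → ℝ, (∀ i, x i ∈ Set.Icc 0 R) → (∀ i, y i ∈ Set.Icc 0 R) →
      (∀ i, |x i - y i| ≤ q) → ‖F x - F y‖ ≤ ε) :
    ‖(q : ℂ) ^ Fintype.card ι * F (fun i => r i + q * y i) -
        ∫ x in Set.univ.pi (fun i => Set.Ioc ((q : ℝ) * y i) (q * y i + q)), F x‖ ≤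
      q ^ Fintype.card ι * ε := by
  have hq' : (0 : ℝ) < q := Nat.cast_pos.2 hq
  set cube := Set.univ.pi (fun i => Set.Ioc ((q : ℝ) * y i) (q * y i + q))
  have hvol : volume.real cube = q ^ Fintype.card ι := by
    rw [measureReal_def, Real.volume_pi_Ioc_toReal fun i => by simp [hq'.le]]
    simp
  have hgrid (i : ι) : (r i : ℝ) + q * y i ∈ Set.Ioc ((q : ℝ) * y i) (q * y i + q) := by
    have hri := Finset.mem_Icc.1 (hr i)
    constructor
    · linarith [show (1 : ℝ) ≤ r i by exact_mod_cast hri.1]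
    · linarith [show (r i : ℝ) ≤ q by exact_mod_cast hri.2]
  have hcube_sub (i : ι) {t : ℝ} (ht : t ∈ Set.Ioc ((q : ℝ) * y i) (q * y i + q)) :
      t ∈ Set.Icc 0 R :=
    ⟨(by positivity : (0 : ℝ) ≤ q * y i).trans ht.1.le, by linarith [ht.2, hyR i]⟩
  rw [norm_sub_rev, show (q : ℂ) ^ Fintype.card ι * F (fun i => r i + q * y i) =
    volume.real cube • F (fun i => r i + q * y i) by rw [hvol, Complex.real_smul]; push_cast; rfl]
  refine (norm_setIntegral_sub_smul_le (volume_pi_Ioc_lt_top _ _) (hF.integrableOn_pi_Ioc _ _)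
    fun x hx => hε _ _ (fun i => hcube_sub i (hx i trivial)) (fun i => hcube_sub i (hgrid i))
      fun i => ?_).trans_eq (by rw [hvol, mul_comm])
  obtain ⟨hx₁, hx₂⟩ := hx i trivial
  obtain ⟨hg₁, hg₂⟩ := hgrid i
  rw [abs_le]
  constructor <;> linarith

end Boxes

lemma mem_Ioc_mul_iff_ceil_eq {q : ℝ} (hq : 0 < q) (j : ℕ) (x : ℝ) :
    x ∈ Set.Ioc (q * j) (q * j + q) ↔ ⌈x / q⌉₊ = j + 1 := by
  rw [Nat.ceil_eq_iff (Nat.add_one_ne_zero j), Nat.add_sub_cancel, lt_div_iff₀ hq, div_le_iff₀ hq,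
    Set.mem_Ioc]
  push_cast
  constructor <;> rintro ⟨h₁, h₂⟩ <;> constructor <;> linarith

lemma grid_box_side_bounds {q r : ℕ} {P : ℝ} (hr : r ∈ Finset.Icc 1 q) (hqP : (q : ℝ) ≤ P) :
    (q : ℝ) * (((⌊P⌋₊ - r) / q : ℕ) + 1) ≤ 2 * P ∧
      |(q : ℝ) * (((⌊P⌋₊ - r) / q : ℕ) + 1) - P| ≤ 2 * q := by
  obtain ⟨hr₁, hrq⟩ := Finset.mem_Icc.1 hr
  have hq : 0 < q := by omega
  have hrN : r ≤ ⌊P⌋₊ := hrq.trans (Nat.le_floor hqP)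
  have hlo := Nat.mul_div_le (⌊P⌋₊ - r) q
  have hhi := Nat.lt_mul_div_succ (⌊P⌋₊ - r) hq
  set Y := (⌊P⌋₊ - r) / q
  have hlo' : (q : ℝ) * Y + r ≤ ⌊P⌋₊ := by exact_mod_cast (by omega : q * Y + r ≤ ⌊P⌋₊)
  have hhi' : (⌊P⌋₊ : ℝ) < q * (Y + 1) + r := by
    exact_mod_cast (by omega : ⌊P⌋₊ < q * (Y + 1) + r)
  have hN := Nat.floor_le ((Nat.cast_nonneg q).trans hqP)
  have hN' := Nat.lt_floor_add_one P
  have hr₁' : (1 : ℝ) ≤ r := by exact_mod_cast hr₁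
  have hrq' : (r : ℝ) ≤ q := by exact_mod_cast hrq
  refine ⟨by nlinarith, abs_le.2 ⟨by nlinarith, by nlinarith⟩⟩

section RiemannSums

variable {ι : Type*} [Fintype ι] [DecidableEq ι]

lemma pi_Ioc_eq_biUnion_cubes {q : ℝ} (hq : 0 < q) (Y : ι → ℕ) :
    Set.univ.pi (fun i => Set.Ioc 0 (q * (Y i + 1))) =
      ⋃ y ∈ Fintype.piFinset (fun i => Finset.range (Y i + 1)),
        Set.univ.pi (fun i => Set.Ioc (q * y i) (q * y i + q)) := by
  ext x
  simp only [Set.mem_pi, Set.mem_univ, true_implies, Set.mem_iUnion, Fintype.mem_piFinset,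
    Finset.mem_range, exists_prop, mem_Ioc_mul_iff_ceil_eq hq]
  have hbox (i : ι) : x i ∈ Set.Ioc 0 (q * (Y i + 1)) ↔ 0 < ⌈x i / q⌉₊ ∧ ⌈x i / q⌉₊ ≤ Y i + 1 := by
    rw [Nat.ceil_pos, Nat.ceil_le, div_pos_iff_of_pos_right hq, div_le_iff₀ hq, Set.mem_Ioc]
    push_cast
    rw [mul_comm]
  simp only [hbox]
  constructor
  · intro hx
    refine ⟨fun i => ⌈x i / q⌉₊ - 1, fun i => ?_, fun i => ?_⟩ <;> have := hx i <;>
      beta_reduce <;> omega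
  · rintro ⟨y, hy, hxy⟩ i
    specialize hy i
    specialize hxy i
    omega

lemma setIntegral_pi_Ioc_eq_sum_cubes {E : Type*} [NormedAddCommGroup E] [NormedSpace ℝ E]
    {f : (ι → ℝ) → E} {q : ℝ} (hq : 0 < q) (Y : ι → ℕ)
    (hf : IntegrableOn f (Set.univ.pi fun i => Set.Ioc 0 (q * (Y i + 1)))) :
    ∫ x in Set.univ.pi (fun i => Set.Ioc 0 (q * (Y i + 1))), f x =
      ∑ y ∈ Fintype.piFinset (fun i => Finset.range (Y i + 1)),
        ∫ x in Set.univ.pi (fun i => Set.Ioc (q * y i) (q * y i + q)), f x := by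
  rw [pi_Ioc_eq_biUnion_cubes hq Y] at hf ⊢
  refine integral_biUnion_finset _ (fun y _ => MeasurableSet.univ_pi fun i => measurableSet_Ioc)
    ?_ fun y hy => hf.mono_set (Set.subset_biUnion_of_mem (u := fun y =>
      Set.univ.pi (fun i => Set.Ioc (q * y i) (q * y i + q))) hy)
  intro y _ z _ hyz
  obtain ⟨i, hi⟩ := Function.ne_iff.1 hyz
  refine Set.disjoint_left.2 fun x hxy hxz => hi ?_
  have h₁ := (mem_Ioc_mul_iff_ceil_eq hq _ _).1 (hxy i (Set.mem_univ i))
  have h₂ := (mem_Ioc_mul_iff_ceil_eq hq _ _).1 (hxz i (Set.mem_univ i))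
  omega

lemma norm_grid_sum_sub_setIntegral_le {F : (ι → ℝ) → ℂ} (hF : Continuous F) {q : ℕ}
    (hq : 0 < q) {r Y : ι → ℕ} (hr : ∀ i, r i ∈ Finset.Icc 1 q) {R ε : ℝ}
    (hYR : ∀ i, (q : ℝ) * (Y i + 1) ≤ R)
    (hε : ∀ x y : ι → ℝ, (∀ i, x i ∈ Set.Icc 0 R) → (∀ i, y i ∈ Set.Icc 0 R) →
      (∀ i, |x i - y i| ≤ q) → ‖F x - F y‖ ≤ ε) :
    ‖(q : ℂ) ^ Fintype.card ι *
          ∑ y ∈ Fintype.piFinset (fun i => Finset.range (Y i + 1)), F (fun i => r i + q * y i) -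
        ∫ x in Set.univ.pi (fun i => Set.Ioc 0 ((q : ℝ) * (Y i + 1))), F x‖ ≤
      (∏ i, (q : ℝ) * (Y i + 1)) * ε := by
  rw [setIntegral_pi_Ioc_eq_sum_cubes (Nat.cast_pos.2 hq) Y (hF.integrableOn_pi_Ioc _ _),
    Finset.mul_sum, ← Finset.sum_sub_distrib]
  refine (norm_sum_le _ _).trans ((Finset.sum_le_sum (g := fun _ => (q : ℝ) ^ Fintype.card ι * ε)
    fun y hy => ?_).trans_eq ?_)
  · refine norm_pow_mul_sub_setIntegral_cube_le hF hq hr (fun i => (hYR i).trans' ?_) hε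
    have hyY : y i ≤ Y i := Nat.lt_succ_iff.1 (Finset.mem_range.1 (Fintype.mem_piFinset.1 hy i))
    gcongr
  · rw [Finset.sum_const, Fintype.card_piFinset, nsmul_eq_mul, Finset.prod_mul_distrib,
      Finset.prod_const, Finset.card_univ]
    push_cast
    simp [mul_comm, mul_assoc]

lemma norm_grid_sum_sub_integral_le {F : (ι → ℝ) → ℂ} (hF : Continuous F)
    (hF1 : ∀ x, ‖F x‖ ≤ 1) {q : ℕ} (hq : 0 < q) {P ε : ℝ} (hqP : (q : ℝ) ≤ P) {r : ι → ℕ}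
    (hr : ∀ i, r i ∈ Finset.Icc 1 q)
    (hε : ∀ x y : ι → ℝ, (∀ i, x i ∈ Set.Icc 0 (2 * P)) → (∀ i, y i ∈ Set.Icc 0 (2 * P)) →
      (∀ i, |x i - y i| ≤ q) → ‖F x - F y‖ ≤ ε) :
    ‖(q : ℂ) ^ Fintype.card ι *
          ∑ y ∈ Fintype.piFinset (fun i => Finset.range ((⌊P⌋₊ - r i) / q + 1)),
            F (fun i => r i + q * y i) -
        ∫ x in Set.univ.pi (fun _ : ι => Set.Icc 0 P), F x‖ ≤
      (2 * P) ^ Fintype.card ι * ε +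
        2 * (Fintype.card ι * (2 * q * (2 * P) ^ (Fintype.card ι - 1))) := by
  have hP : 0 ≤ P := (Nat.cast_nonneg q).trans hqP
  have hε0 : 0 ≤ ε := (norm_nonneg _).trans
    (hε 0 0 (fun _ => ⟨le_rfl, by positivity⟩) (fun _ => ⟨le_rfl, by positivity⟩) (by simp))
  have hend (i : ι) := grid_box_side_bounds (hr i) hqP
  have hcubes := norm_grid_sum_sub_setIntegral_le hF hq hr (fun i => (hend i).1) hε
  have hbox := norm_setIntegral_pi_Ioc_sub_pi_Icc_le hF hF1 (R := 2 * P)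
    (fun i => ⟨by positivity, (hend i).1⟩) ⟨hP, by linarith⟩ fun i => (hend i).2
  refine (norm_sub_le_norm_sub_add_norm_sub _ _ _).trans (add_le_add (hcubes.trans ?_) hbox)
  gcongr
  calc ∏ i, (q : ℝ) * (((⌊P⌋₊ - r i) / q : ℕ) + 1) ≤ ∏ _i : ι, 2 * P :=
        Finset.prod_le_prod (fun i _ => by positivity) fun i _ => (hend i).1
    _ = (2 * P) ^ Fintype.card ι := by simp

end RiemannSums

lemma PP_pow (k n : ℕ) (hk : k ≠ 0) : PP k n ^ (3 * k) = n := by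
  rw [PP, ← Real.rpow_natCast, ← Real.rpow_mul n.cast_nonneg, Nat.cast_mul, Nat.cast_ofNat,
    one_div_mul_cancel (mul_ne_zero three_ne_zero (Nat.cast_ne_zero.2 hk)), Real.rpow_one]

lemma major_arc_error_le {k : ℕ} (hk : k ≠ 0) {P q β N : ℝ} (hP : 0 ≤ P) (hq : 0 ≤ q)
    (hPN : P ^ (3 * k) = N) :
    (2 * P) ^ 3 * (2 * π * |β| * (k * (3 * (2 * P) ^ 3) ^ (k - 1)) * (9 * (2 * P) ^ 2 * q)) +
        2 * (3 * (2 * q * (2 * P) ^ 2)) ≤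
      k * 24 ^ (k + 2) * P ^ 2 * q * (1 + N * |β|) := by
  obtain ⟨j, rfl⟩ := Nat.exists_eq_add_one_of_ne_zero hk
  have hN : 0 ≤ N := hPN ▸ by positivity
  have hexpand : (2 * P) ^ 3 * (2 * π * |β| * ((j + 1 : ℕ) * (3 * (2 * P) ^ 3) ^ (j + 1 - 1)) *
        (9 * (2 * P) ^ 2 * q)) + 2 * (3 * (2 * q * (2 * P) ^ 2)) =
      576 * π * 24 ^ j * (j + 1 : ℕ) * P ^ 2 * q * (N * |β|) + 48 * P ^ 2 * q := by
    rw [← hPN, Nat.add_sub_cancel]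
    ring
  have h24 : (1 : ℝ) ≤ 24 ^ j := one_le_pow₀ (by norm_num)
  have hj : (1 : ℝ) ≤ (j + 1 : ℕ) := by exact_mod_cast Nat.le_add_left 1 j
  have hπ : 576 * π * 24 ^ j ≤ 24 ^ j * 24 ^ 3 := by nlinarith [Real.pi_lt_four]
  have h48 : (48 : ℝ) ≤ (j + 1 : ℕ) * (24 ^ j * 24 ^ 3) := by nlinarith
  rw [hexpand, show j + 1 + 2 = j + 3 by ring, pow_add]
  calc _ ≤ 24 ^ j * 24 ^ 3 * (j + 1 : ℕ) * P ^ 2 * q * (N * |β|) +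
        (j + 1 : ℕ) * (24 ^ j * 24 ^ 3) * P ^ 2 * q := by gcongr
    _ = _ := by ring

lemma norm_fexp_sub_le {k : ℕ} (hk : k ≠ 0) (n : ℕ) (a : ℤ) {q : ℕ} (hq : 0 < q)
    (hqP : (q : ℝ) ≤ PP k n) (α : ℝ) :
    ‖fexp k n α - ((q : ℂ) ^ 3)⁻¹ * Sqa k q a * vint k n (α - a / q)‖ ≤
      k * 24 ^ (k + 2) * PP k n ^ 2 * q * (1 + n * |α - a / q|) := by
  set P := PP k n
  set β := α - a / q
  set B := k * 24 ^ (k + 2) * P ^ 2 * q * (1 + n * |β|)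
  have hq3 : (q : ℂ) ^ 3 ≠ 0 := pow_ne_zero 3 (Nat.cast_ne_zero.2 hq.ne')
  have hgrid (r : Fin 3 → ℕ) (hr : r ∈ Fintype.piFinset (fun _ : Fin 3 => Finset.Icc 1 q)) :
      ‖∑ y ∈ Fintype.piFinset (fun i => Finset.range ((⌊P⌋₊ - r i) / q + 1)),
            e (β * Tr (fun i => (r i : ℝ) + q * y i) ^ k) - ((q : ℂ) ^ 3)⁻¹ * vint k n β‖ ≤
        ((q : ℝ) ^ 3)⁻¹ * B := by
    have h := norm_grid_sum_sub_integral_le (F := fun x => e (β * Tr x ^ k))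
      (continuous_e.comp (by unfold Tr; fun_prop)) (fun _ => (norm_e _).le) hq hqP
      (Fintype.mem_piFinset.1 hr) fun x y hx hy hxy => norm_e_Tr_pow_sub_le β k hx hy hxy
    simp only [Fintype.card_fin, Nat.cast_ofNat] at h
    rw [← inv_mul_cancel_left₀ hq3 (∑ y ∈ _, _), ← mul_sub, norm_mul, norm_inv, norm_pow,
      Complex.norm_natCast]
    exact mul_le_mul_of_nonneg_left (h.trans (major_arc_error_le hk
      (q.cast_nonneg.trans hqP) q.cast_nonneg (PP_pow k n hk))) (by positivity)
  have hmain : ((q : ℂ) ^ 3)⁻¹ * Sqa k q a * vint k n β =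
      ∑ r ∈ Fintype.piFinset (fun _ : Fin 3 => Finset.Icc 1 q),
        e (((a * (Tn r : ℤ) ^ k : ℤ) : ℝ) / q) * (((q : ℂ) ^ 3)⁻¹ * vint k n β) := by
    rw [Sqa, Finset.mul_sum, Finset.sum_mul]
    exact Finset.sum_congr rfl fun _ _ => by ring
  rw [fexp, sum_piFinset_Icc_eq_sum_residues _ hq (Nat.le_floor hqP), hmain]
  simp_rw [e_mul_Tn_add_mul_pow hq.ne' k a α, ← Finset.mul_sum, ← Finset.sum_sub_distrib,
    ← mul_sub]
  refine (norm_sum_le _ _).trans ((Finset.sum_le_sum (g := fun _ => ((q : ℝ) ^ 3)⁻¹ * B)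
    fun r hr => ?_).trans_eq ?_)
  · rw [norm_mul, norm_e, one_mul]
    exact hgrid r hr
  · have hq3' : (q : ℝ) ^ 3 ≠ 0 := pow_ne_zero 3 (Nat.cast_ne_zero.2 hq.ne')
    simp [mul_inv_cancel_left₀ hq3']

/-- Major arc approximation of `f(α)` by `q^{-3} S(q,a) v(β)`. -/
theorem statement11 (k : ℕ) (hk : 2 ≤ k) :
    ∃ C > (0 : ℝ), ∃ N : ℕ, ∀ n : ℕ, N ≤ n → ∀ a : ℤ, ∀ q : ℕ, 1 ≤ q →
      Int.gcd a q = 1 → (q : ℝ) < PP k n → ∀ α ∈ Set.Ico (0 : ℝ) 1,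
        ‖fexp k n α - ((q : ℂ) ^ 3)⁻¹ * Sqa k q a * vint k n (α - (a : ℝ) / q)‖
          ≤ C * PP k n ^ 2 * q * (1 + n * |α - (a : ℝ) / q|) := by
  have hk₀ : k ≠ 0 := by omega
  exact ⟨k * 24 ^ (k + 2), by positivity, 0, fun n _ a q hq _ hqP α _ =>
    norm_fexp_sub_le hk₀ n a hq hqP.le α⟩
end
end
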